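/- Let C₀>0, τ>0 and 0<μ<μ_τ, and let u ∈ ℰ_{τ,μ}(C₀). Then the function x ↦ V(x;u) is differentiable on ℝ and its derivative satisfies |∂ₓV(x;u)| ≤ (1/√(1+τμc_μ−μ²) + μ/(1+τμc_μ−μ²))·e^{−μx} for every x∈ℝ. -/

import Mathlib

open Real Filter MeasureTheory Set

/-- `c_μ = μ + a/μ`. -/
noncomputable def cmu (a μ : ℝ) : ℝ := μ + a / μ

/-- `μ_τ = √a` if `τ ≥ 1`, and `min{√a, √((1+τa)/(1−τ))}` if `0 < τ < 1`. -/
noncomputable def muTau (a τ : ℝ) : ℝ :=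
  if 1 ≤ τ then Real.sqrt a else min (Real.sqrt a) (Real.sqrt ((1 + τ * a) / (1 - τ)))

/-- Condition (H) on `(τ, μ, χ)`. -/
noncomputable def condH (a b τ μ χ : ℝ) : Prop :=
  1 + τ * cmu a μ < (b - χ) / χ ∧
  (μ + τ * cmu a μ) / Real.sqrt (1 + τ * μ * cmu a μ - μ ^ 2)
      + μ * (μ + τ * cmu a μ) / (1 + τ * μ * cmu a μ - μ ^ 2) ≤ (b - χ) / χ

/-- `V(x;u) = ∫₀^∞ ∫_ℝ (e^{−s}/√(4πs)) e^{−(x−z)²/(4s)} u(z+τcs) dz ds`. -/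
noncomputable def Vfun (τ c : ℝ) (u : ℝ → ℝ) (x : ℝ) : ℝ :=
  ∫ s in Set.Ioi (0:ℝ), ∫ z : ℝ,
    (Real.exp (-s) / Real.sqrt (4 * Real.pi * s)) * Real.exp (-(x - z) ^ 2 / (4 * s))
      * u (z + τ * c * s)

/-- `U⁺(x) = min{C₀, e^{−μx}}`. -/
noncomputable def Uplus (μ C₀ : ℝ) (x : ℝ) : ℝ := min C₀ (Real.exp (-μ * x))

/-- `U⁻(x) = max{0, e^{−μx} − d e^{−μ̃x}}`. -/
noncomputable def Uminus (μ μt d : ℝ) (x : ℝ) : ℝ :=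
  max 0 (Real.exp (-μ * x) - d * Real.exp (-μt * x))

/-- `u ∈ ℰ_{τ,μ}(C₀)` (built from `μ̃` and `d`): bounded uniformly continuous with
`U⁻ ≤ u ≤ U⁺`. -/
def memE (μ C₀ μt d : ℝ) (u : ℝ → ℝ) : Prop :=
  UniformContinuous u ∧ ∀ x, Uminus μ μt d x ≤ u x ∧ u x ≤ Uplus μ C₀ x

/-!
Write `V(x) = ∫₀^∞ ∫ G_s(x - z) e^{-s} u(z + τ c_μ s) dz ds` with `G_s` the heat kernel. The
`x`-derivative falls on the kernel: `∂ₓ G_s(x - z) = (z - x) / (2s) · G_s(x - z)`. Since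
`0 ≤ u(y) ≤ e^{-μy}` and `G_s(x - z) e^{-μz} = e^{μ²s - μx} G_s(x - 2μs - z)`, the inner integral
is at most `e^{-μx} e^{-Λs} (1/√(πs) + μ)` with `Λ = 1 + τμc_μ - μ²`, by the first absolute moment
`2√(s/π)` of `G_s`. Integrating in `s` (a Gamma integral) gives `1/√Λ + μ/Λ`; the same bounds,
locally uniform in `x`, justify differentiating under both integrals.
-/

section Gaussian

variable {b : ℝ}

theorem integrable_abs_mul_exp_neg_mul_sq (hb : 0 < b) :
    Integrable fun v : ℝ => |v| * exp (-b * v ^ 2) :=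
  (integrable_mul_exp_neg_mul_sq hb).abs.congr (.of_forall fun v => by simp [abs_mul])

theorem integral_abs_mul_exp_neg_mul_sq (hb : 0 < b) :
    ∫ v : ℝ, |v| * exp (-b * v ^ 2) = 1 / b := by
  have h := integral_rpow_mul_exp_neg_mul_rpow two_pos (by norm_num : (-1 : ℝ) < 1) hb
  norm_num [Real.rpow_two, Real.rpow_neg_one, ← neg_mul] at h
  calc ∫ v : ℝ, |v| * exp (-b * v ^ 2) = ∫ v : ℝ, |v| * exp (-b * |v| ^ 2) := by
        simp only [sq_abs]
    _ = 1 / b := by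
        rw [integral_comp_abs (f := fun v => v * exp (-b * v ^ 2)), h]
        field_simp

theorem integrable_abs_sub_add_mul_exp_neg_mul_sq (hb : 0 < b) (x₀ c : ℝ) :
    Integrable fun z : ℝ => (|z - x₀| + c) * exp (-b * (z - x₀) ^ 2) := by
  simp_rw [add_mul]
  exact ((integrable_abs_mul_exp_neg_mul_sq hb).add
    ((integrable_exp_neg_mul_sq hb).const_mul c)).comp_sub_right x₀

theorem integral_abs_sub_add_mul_exp_neg_mul_sq (hb : 0 < b) (x₀ c : ℝ) :
    ∫ z : ℝ, (|z - x₀| + c) * exp (-b * (z - x₀) ^ 2) = 1 / b + c * √(π / b) := by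
  rw [integral_sub_right_eq_self (fun v => (|v| + c) * exp (-b * v ^ 2)) x₀]
  simp_rw [add_mul]
  rw [integral_add (integrable_abs_mul_exp_neg_mul_sq hb)
    ((integrable_exp_neg_mul_sq hb).const_mul c), integral_const_mul,
    integral_abs_mul_exp_neg_mul_sq hb, integral_gaussian]

end Gaussian

section HeatKernel

noncomputable def heatKernel (s x z : ℝ) : ℝ := exp (-(x - z) ^ 2 / (4 * s)) / √(4 * π * s)

noncomputable def heatKernelDeriv (s x z : ℝ) : ℝ := (z - x) / (2 * s) * heatKernel s x z

variable {s : ℝ}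

theorem heatKernel_nonneg (s x z : ℝ) : 0 ≤ heatKernel s x z := by
  unfold heatKernel; positivity

theorem heatKernel_eq_exp_neg_mul_sq (s x z : ℝ) :
    heatKernel s x z = exp (-(1 / (4 * s)) * (z - x) ^ 2) / √(4 * π * s) := by
  unfold heatKernel; ring_nf

theorem hasDerivAt_heatKernel (s z x : ℝ) :
    HasDerivAt (fun x => heatKernel s x z) (heatKernelDeriv s x z) x := by
  have h := ((((hasDerivAt_id x).sub_const z).pow 2).neg.div_const (4 * s)).exp.div_const
    √(4 * π * s)
  refine h.congr_deriv ?_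
  simp only [heatKernelDeriv, heatKernel, id, Nat.cast_ofNat, Pi.pow_apply, Pi.neg_apply]
  ring

theorem integral_heatKernel (hs : 0 < s) (x : ℝ) : ∫ z, heatKernel s x z = 1 := by
  simp_rw [heatKernel_eq_exp_neg_mul_sq]
  rw [integral_div, integral_sub_right_eq_self (fun v => exp (-(1 / (4 * s)) * v ^ 2)) x,
    integral_gaussian, div_eq_one_iff_eq (by positivity)]
  congr 1
  field_simp

theorem integrable_heatKernel_mul (hs : 0 < s) (x : ℝ) {g : ℝ → ℝ}
    (hg : AEStronglyMeasurable g) {C : ℝ} (hC : ∀ z, |g z| ≤ C) :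
    Integrable fun z => heatKernel s x z * g z := by
  simp_rw [heatKernel_eq_exp_neg_mul_sq, div_mul_eq_mul_div]
  refine Integrable.div_const ?_ _
  exact ((integrable_exp_neg_mul_sq (by positivity : 0 < 1 / (4 * s))).comp_sub_right x).mul_bdd
    hg (.of_forall hC)

theorem abs_integral_heatKernel_mul_le (hs : 0 < s) {g : ℝ → ℝ} {C : ℝ} (hC : ∀ z, |g z| ≤ C)
    (x : ℝ) :
    |∫ z, heatKernel s x z * g z| ≤ C := by
  have hint : Integrable fun z => heatKernel s x z * C :=
    integrable_heatKernel_mul hs x aestronglyMeasurable_const fun _ => le_rfl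
  calc |∫ z, heatKernel s x z * g z| ≤ ∫ z, heatKernel s x z * C :=
        norm_integral_le_of_norm_le (f := fun z => heatKernel s x z * g z) hint
          (.of_forall fun z => by
            rw [norm_mul, Real.norm_of_nonneg (heatKernel_nonneg s x z), Real.norm_eq_abs]
            exact mul_le_mul_of_nonneg_left (hC z) (heatKernel_nonneg s x z))
    _ = C := by rw [integral_mul_const, integral_heatKernel hs, one_mul]

theorem heatKernel_le_of_abs_sub_lt_one (hs : 0 < s) {x x₀ : ℝ} (hx : |x - x₀| < 1) (z : ℝ) :
    heatKernel s x z
      ≤ exp (1 / (4 * s)) * (exp (-(1 / (8 * s)) * (z - x₀) ^ 2) / √(4 * π * s)) := by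
  rw [heatKernel_eq_exp_neg_mul_sq, mul_div_assoc', ← exp_add]
  gcongr
  have hsq : (z - x₀) ^ 2 ≤ 2 * (z - x) ^ 2 + 2 := by
    nlinarith [sq_nonneg (z - x + (x - x₀)), sq_nonneg (z - x - (x - x₀)), abs_lt.1 hx]
  have h8 : 1 / (8 * s) * (z - x₀) ^ 2 ≤ 1 / (8 * s) * (2 * (z - x) ^ 2 + 2) := by gcongr
  have : 1 / (8 * s) * (2 * (z - x) ^ 2 + 2) = 1 / (4 * s) * (z - x) ^ 2 + 1 / (4 * s) := by
    field_simp; ring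
  linarith

theorem hasDerivAt_integral_heatKernel_mul (hs : 0 < s) {g : ℝ → ℝ}
    (hg : AEStronglyMeasurable g) {C : ℝ} (hC : ∀ z, |g z| ≤ C) (x₀ : ℝ) :
    HasDerivAt (fun x => ∫ z, heatKernel s x z * g z) (∫ z, heatKernelDeriv s x₀ z * g z) x₀ := by
  have hb : 0 < 1 / (8 * s) := by positivity
  set M := C * (exp (1 / (4 * s)) / (2 * s * √(4 * π * s)))
  have h_bound : ∀ z, ∀ x ∈ Metric.ball x₀ 1,
      ‖heatKernelDeriv s x z * g z‖
        ≤ M * ((|z - x₀| + 1) * exp (-(1 / (8 * s)) * (z - x₀) ^ 2)) := by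
    intro z x hx
    rw [Metric.mem_ball, Real.dist_eq] at hx
    have hdist : |z - x| ≤ |z - x₀| + 1 := by
      linarith [abs_sub_le z x₀ x, abs_sub_comm x x₀]
    calc ‖heatKernelDeriv s x z * g z‖ = |z - x| / (2 * s) * heatKernel s x z * |g z| := by
          simp only [heatKernelDeriv, norm_mul, norm_div, Real.norm_eq_abs,
            abs_of_nonneg (heatKernel_nonneg s x z), abs_two, abs_of_pos hs]
      _ ≤ (|z - x₀| + 1) / (2 * s)
            * (exp (1 / (4 * s)) * (exp (-(1 / (8 * s)) * (z - x₀) ^ 2) / √(4 * π * s))) * C := by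
          gcongr
          · exact heatKernel_nonneg s x z
          · exact heatKernel_le_of_abs_sub_lt_one hs hx z
          · exact hC z
      _ = M * ((|z - x₀| + 1) * exp (-(1 / (8 * s)) * (z - x₀) ^ 2)) := by
          simp only [M]; ring
  have hF'_meas : AEStronglyMeasurable fun z => heatKernelDeriv s x₀ z * g z :=
    (Continuous.aestronglyMeasurable (by unfold heatKernelDeriv heatKernel; fun_prop)).mul hg
  exact (hasDerivAt_integral_of_dominated_loc_of_deriv_le (Metric.ball_mem_nhds x₀ one_pos)
    (.of_forall fun x => (integrable_heatKernel_mul hs x hg hC).aestronglyMeasurable)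
    (integrable_heatKernel_mul hs x₀ hg hC) hF'_meas (.of_forall h_bound)
    ((integrable_abs_sub_add_mul_exp_neg_mul_sq hb x₀ 1).const_mul M)
    (.of_forall fun z x _ => (hasDerivAt_heatKernel s z x).mul_const (g z))).2

theorem heatKernel_mul_exp_neg_mul (hs : s ≠ 0) (μ x z : ℝ) :
    heatKernel s x z * exp (-μ * z) = exp (μ ^ 2 * s - μ * x) * heatKernel s (x - 2 * μ * s) z := by
  rw [heatKernel, heatKernel, div_mul_eq_mul_div, mul_div_assoc', ← exp_add, ← exp_add]
  congr 2
  field_simp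
  ring

theorem integrable_abs_sub_add_mul_heatKernel (hs : 0 < s) (x c : ℝ) :
    Integrable fun z => (|z - x| + c) * heatKernel s x z := by
  simp_rw [heatKernel_eq_exp_neg_mul_sq, mul_div_assoc']
  exact (integrable_abs_sub_add_mul_exp_neg_mul_sq (by positivity) x c).div_const _

theorem integral_abs_sub_add_mul_heatKernel (hs : 0 < s) (x c : ℝ) :
    ∫ z, (|z - x| + c) * heatKernel s x z = 2 * √(s / π) + c := by
  simp_rw [heatKernel_eq_exp_neg_mul_sq, mul_div_assoc']
  rw [integral_div, integral_abs_sub_add_mul_exp_neg_mul_sq (by positivity)]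
  have h4 : √(4 * π * s) = 2 * √π * √s := by
    rw [show 4 * π * s = 2 ^ 2 * π * s by ring, sqrt_mul (by positivity),
      sqrt_mul (by positivity), sqrt_sq zero_le_two]
  rw [show π / (1 / (4 * s)) = 4 * π * s by field_simp, h4, sqrt_div' _ pi_pos.le]
  have : 0 < √π := sqrt_pos.2 pi_pos
  have : 0 < √s := sqrt_pos.2 hs
  field_simp
  linear_combination (-4) * mul_self_sqrt hs.le

theorem abs_integral_heatKernelDeriv_mul_le (hs : 0 < s) {μ K : ℝ} (hμ : 0 ≤ μ) {g : ℝ → ℝ}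
    (hg : ∀ z, |g z| ≤ K * exp (-μ * z)) (x : ℝ) :
    |∫ z, heatKernelDeriv s x z * g z|
      ≤ K * exp (μ ^ 2 * s - μ * x) * (1 / √(π * s) + μ) := by
  have hK : 0 ≤ K := (mul_nonneg_iff_of_pos_right (exp_pos _)).mp ((abs_nonneg _).trans (hg 0))
  set x' := x - 2 * μ * s
  set A := K * exp (μ ^ 2 * s - μ * x) / (2 * s)
  have hpt : ∀ z,
      ‖heatKernelDeriv s x z * g z‖ ≤ A * ((|z - x'| + 2 * μ * s) * heatKernel s x' z) := by
    intro z
    have hdist : |z - x| ≤ |z - x'| + 2 * μ * s := by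
      simpa [x', abs_of_nonneg (by positivity : 0 ≤ 2 * μ * s)] using abs_sub_le z x' x
    calc ‖heatKernelDeriv s x z * g z‖ = |z - x| / (2 * s) * heatKernel s x z * |g z| := by
          simp only [heatKernelDeriv, norm_mul, norm_div, Real.norm_eq_abs,
            abs_of_nonneg (heatKernel_nonneg s x z), abs_two, abs_of_pos hs]
      _ ≤ |z - x| / (2 * s) * heatKernel s x z * (K * exp (-μ * z)) :=
          mul_le_mul_of_nonneg_left (hg z) (mul_nonneg (by positivity) (heatKernel_nonneg s x z))
      _ = A * (|z - x| * heatKernel s x' z) := by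
          rw [mul_comm K, ← mul_assoc, mul_assoc _ (heatKernel s x z),
            heatKernel_mul_exp_neg_mul hs.ne']
          ring
      _ ≤ A * ((|z - x'| + 2 * μ * s) * heatKernel s x' z) := by
          gcongr
          exact heatKernel_nonneg s x' z
  calc |∫ z, heatKernelDeriv s x z * g z|
      ≤ ∫ z, A * ((|z - x'| + 2 * μ * s) * heatKernel s x' z) :=
        norm_integral_le_of_norm_le ((integrable_abs_sub_add_mul_heatKernel hs x' _).const_mul A)
          (.of_forall hpt)
    _ = K * exp (μ ^ 2 * s - μ * x) * (1 / √(π * s) + μ) := by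
        rw [integral_const_mul, integral_abs_sub_add_mul_heatKernel hs, sqrt_div' _ pi_pos.le,
          sqrt_mul pi_pos.le]
        have : 0 < √π := sqrt_pos.2 pi_pos
        have : 0 < √s := sqrt_pos.2 hs
        simp only [A]
        field_simp
        linear_combination K * mul_self_sqrt hs.le

end HeatKernel

section LaplaceTransform

variable {Λ : ℝ}

theorem exp_neg_mul_mul_one_div_sqrt_add_eq (μ : ℝ) {s : ℝ} (hs : 0 < s) :
    exp (-Λ * s) * (1 / √(π * s) + μ)
      = (√π)⁻¹ * (s ^ (-(1 / 2) : ℝ) * exp (-Λ * s ^ (1 : ℝ))) + μ * exp (-Λ * s) := by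
  rw [rpow_neg hs.le, ← sqrt_eq_rpow, rpow_one, sqrt_mul pi_pos.le]
  ring

theorem integrableOn_exp_neg_mul_mul_one_div_sqrt_add (hΛ : 0 < Λ) (μ : ℝ) :
    IntegrableOn (fun s => exp (-Λ * s) * (1 / √(π * s) + μ)) (Ioi 0) :=
  IntegrableOn.congr_fun
    (((integrableOn_rpow_mul_exp_neg_mul_rpow (s := -(1 / 2)) (by norm_num) one_pos hΛ).const_mul
      (√π)⁻¹).add ((exp_neg_integrableOn_Ioi 0 hΛ).const_mul μ))
    (fun _ hs => (exp_neg_mul_mul_one_div_sqrt_add_eq μ hs).symm) measurableSet_Ioi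

theorem integral_exp_neg_mul_mul_one_div_sqrt_add (hΛ : 0 < Λ) (μ : ℝ) :
    ∫ s in Ioi 0, exp (-Λ * s) * (1 / √(π * s) + μ) = 1 / √Λ + μ / Λ := by
  have h := integrableOn_rpow_mul_exp_neg_mul_rpow (s := -(1 / 2)) (by norm_num) one_pos hΛ
  rw [setIntegral_congr_fun measurableSet_Ioi fun s hs => exp_neg_mul_mul_one_div_sqrt_add_eq μ hs,
    integral_add (h.const_mul _) ((exp_neg_integrableOn_Ioi 0 hΛ).const_mul μ),
    integral_const_mul, integral_const_mul,
    integral_rpow_mul_exp_neg_mul_rpow one_pos (by norm_num) hΛ,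
    integral_exp_mul_Ioi (neg_lt_zero.2 hΛ)]
  norm_num [Gamma_one_half_eq, rpow_neg hΛ.le, ← sqrt_eq_rpow]
  field_simp [(sqrt_pos.2 pi_pos).ne']

end LaplaceTransform

section Vfun

variable {τ c μ C : ℝ} {u : ℝ → ℝ}

noncomputable def VfunDeriv (τ c : ℝ) (u : ℝ → ℝ) (x : ℝ) : ℝ :=
  ∫ s in Ioi 0, ∫ z, heatKernelDeriv s x z * (exp (-s) * u (z + τ * c * s))

theorem Vfun_eq_integral_heatKernel (τ c : ℝ) (u : ℝ → ℝ) :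
    Vfun τ c u = fun x => ∫ s in Ioi 0, ∫ z, heatKernel s x z * (exp (-s) * u (z + τ * c * s)) := by
  funext x
  refine setIntegral_congr_fun measurableSet_Ioi fun s _ =>
    integral_congr_ae (.of_forall fun z => ?_)
  simp only [heatKernel]
  ring

theorem abs_integral_heatKernelDeriv_mul_le_exp {s : ℝ} (hs : 0 < s) (hμ : 0 ≤ μ)
    (hue : ∀ y, |u y| ≤ exp (-μ * y)) (x : ℝ) :
    |∫ z, heatKernelDeriv s x z * (exp (-s) * u (z + τ * c * s))|
      ≤ exp (-(1 + τ * μ * c - μ ^ 2) * s) * (1 / √(π * s) + μ) * exp (-μ * x) := by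
  have hg : ∀ z, |exp (-s) * u (z + τ * c * s)| ≤ exp (-s - μ * τ * c * s) * exp (-μ * z) := by
    intro z
    calc |exp (-s) * u (z + τ * c * s)| = exp (-s) * |u (z + τ * c * s)| := by
          rw [abs_mul, abs_of_pos (exp_pos _)]
      _ ≤ exp (-s) * exp (-μ * (z + τ * c * s)) := by gcongr; exact hue _
      _ = exp (-s - μ * τ * c * s) * exp (-μ * z) := by rw [← exp_add, ← exp_add]; ring_nf
  refine (abs_integral_heatKernelDeriv_mul_le hs hμ hg x).trans_eq ?_
  have hexp : exp (-s - μ * τ * c * s) * exp (μ ^ 2 * s - μ * x)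
      = exp (-(1 + τ * μ * c - μ ^ 2) * s) * exp (-μ * x) := by
    rw [← exp_add, ← exp_add]; ring_nf
  linear_combination (1 / √(π * s) + μ) * hexp

theorem integrableOn_integral_heatKernel_mul (hu : Continuous u) (hC : ∀ y, |u y| ≤ C)
    (x : ℝ) :
    IntegrableOn (fun s => ∫ z, heatKernel s x z * (exp (-s) * u (z + τ * c * s))) (Ioi 0) := by
  refine Integrable.mono' ((exp_neg_integrableOn_Ioi 0 one_pos).mul_const C)
    (StronglyMeasurable.integral_prod_right' (f := fun p : ℝ × ℝ =>
      heatKernel p.1 x p.2 * (exp (-p.1) * u (p.2 + τ * c * p.1)))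
      (by unfold heatKernel; fun_prop)).aestronglyMeasurable ?_
  filter_upwards [ae_restrict_mem measurableSet_Ioi] with s hs
  refine (abs_integral_heatKernel_mul_le (C := exp (-s) * C) hs (fun z => ?_) x).trans_eq
    (by rw [neg_one_mul])
  rw [abs_mul, abs_exp]
  exact mul_le_mul_of_nonneg_left (hC _) (exp_pos _).le

theorem hasDerivAt_Vfun (hu : Continuous u) (hC : ∀ y, |u y| ≤ C) (hμ : 0 ≤ μ)
    (hue : ∀ y, |u y| ≤ exp (-μ * y)) (hΛ : 0 < 1 + τ * μ * c - μ ^ 2) (x₀ : ℝ) :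
    HasDerivAt (Vfun τ c u) (VfunDeriv τ c u x₀) x₀ := by
  have hF'_meas : AEStronglyMeasurable (fun s => ∫ z, heatKernelDeriv s x₀ z *
      (exp (-s) * u (z + τ * c * s))) (volume.restrict (Ioi 0)) :=
    (StronglyMeasurable.integral_prod_right' (f := fun p : ℝ × ℝ =>
      heatKernelDeriv p.1 x₀ p.2 * (exp (-p.1) * u (p.2 + τ * c * p.1)))
      (by unfold heatKernelDeriv heatKernel; fun_prop)).aestronglyMeasurable
  have h_bound : ∀ᵐ s ∂volume.restrict (Ioi 0), ∀ x ∈ Metric.ball x₀ 1,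
      ‖∫ z, heatKernelDeriv s x z * (exp (-s) * u (z + τ * c * s))‖
        ≤ exp (-(1 + τ * μ * c - μ ^ 2) * s) * (1 / √(π * s) + μ) * (exp μ * exp (-μ * x₀)) := by
    filter_upwards [ae_restrict_mem measurableSet_Ioi] with s hs x hx
    rw [Metric.mem_ball, Real.dist_eq] at hx
    refine (abs_integral_heatKernelDeriv_mul_le_exp hs hμ hue x).trans ?_
    rw [← exp_add]
    gcongr
    nlinarith [(abs_lt.1 hx).1]
  have h_diff : ∀ᵐ s ∂volume.restrict (Ioi 0), ∀ x ∈ Metric.ball x₀ 1,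
      HasDerivAt (fun x => ∫ z, heatKernel s x z * (exp (-s) * u (z + τ * c * s)))
        (∫ z, heatKernelDeriv s x z * (exp (-s) * u (z + τ * c * s))) x := by
    filter_upwards [ae_restrict_mem measurableSet_Ioi] with s hs x _
    refine hasDerivAt_integral_heatKernel_mul (C := exp (-s) * C) hs
      (by fun_prop : Continuous _).aestronglyMeasurable (fun z => ?_) x
    rw [abs_mul, abs_exp]
    exact mul_le_mul_of_nonneg_left (hC _) (exp_pos _).le
  rw [Vfun_eq_integral_heatKernel]
  exact (hasDerivAt_integral_of_dominated_loc_of_deriv_le (Metric.ball_mem_nhds x₀ one_pos)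
    (.of_forall fun x => (integrableOn_integral_heatKernel_mul hu hC x).aestronglyMeasurable)
    (integrableOn_integral_heatKernel_mul hu hC x₀) hF'_meas h_bound
    ((integrableOn_exp_neg_mul_mul_one_div_sqrt_add hΛ μ).mul_const _) h_diff).2

theorem abs_VfunDeriv_le (hμ : 0 ≤ μ) (hue : ∀ y, |u y| ≤ exp (-μ * y))
    (hΛ : 0 < 1 + τ * μ * c - μ ^ 2) (x : ℝ) :
    |VfunDeriv τ c u x|
      ≤ (1 / √(1 + τ * μ * c - μ ^ 2) + μ / (1 + τ * μ * c - μ ^ 2)) * exp (-μ * x) := by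
  calc |VfunDeriv τ c u x|
      ≤ ∫ s in Ioi 0, exp (-(1 + τ * μ * c - μ ^ 2) * s) * (1 / √(π * s) + μ) * exp (-μ * x) :=
        norm_integral_le_of_norm_le
          (f := fun s => ∫ z, heatKernelDeriv s x z * (exp (-s) * u (z + τ * c * s)))
          ((integrableOn_exp_neg_mul_mul_one_div_sqrt_add hΛ μ).mul_const _)
          (by filter_upwards [ae_restrict_mem measurableSet_Ioi] with s hs
              exact abs_integral_heatKernelDeriv_mul_le_exp hs hμ hue x)
    _ = _ := by rw [integral_mul_const, integral_exp_neg_mul_mul_one_div_sqrt_add hΛ μ]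

end Vfun

theorem one_add_mul_cmu_sub_sq_pos {a τ μ : ℝ} (ha : 0 < a) (hμ0 : 0 < μ) (hμ : μ < muTau a τ) :
    0 < 1 + τ * μ * cmu a μ - μ ^ 2 := by
  have hcmu : τ * μ * cmu a μ = τ * (μ ^ 2 + a) := by
    unfold cmu; field_simp
  rw [hcmu]
  by_cases hτ : 1 ≤ τ
  · nlinarith [mul_nonneg (sub_nonneg.2 hτ) (sq_nonneg μ)]
  · rw [muTau, if_neg hτ] at hμ
    have h := (lt_sqrt hμ0.le).1 (hμ.trans_le (min_le_right _ _))
    rw [lt_div_iff₀ (by linarith)] at h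
    nlinarith

namespace memE

variable {μ C₀ μt d : ℝ} {u : ℝ → ℝ}

theorem nonneg (hu : memE μ C₀ μt d u) (y : ℝ) : 0 ≤ u y :=
  (le_max_left _ _).trans (hu.2 y).1

theorem abs_le_const (hu : memE μ C₀ μt d u) (y : ℝ) : |u y| ≤ C₀ := by
  rw [abs_of_nonneg (hu.nonneg y)]
  exact (hu.2 y).2.trans (min_le_left _ _)

theorem abs_le_exp (hu : memE μ C₀ μt d u) (y : ℝ) : |u y| ≤ exp (-μ * y) := by
  rw [abs_of_nonneg (hu.nonneg y)]
  exact (hu.2 y).2.trans (min_le_right _ _)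

end memE

theorem Vfun_deriv_bound_general (a τ μ : ℝ) (ha : 0 < a)
    (hμ0 : 0 < μ) (hμ : μ < muTau a τ)
    (C₀ : ℝ)
    (μt d : ℝ)
    (u : ℝ → ℝ) (hu : memE μ C₀ μt d u) :
    ∀ x : ℝ, DifferentiableAt ℝ (Vfun τ (cmu a μ) u) x ∧
      |deriv (Vfun τ (cmu a μ) u) x|
        ≤ (1 / Real.sqrt (1 + τ * μ * cmu a μ - μ ^ 2)
            + μ / (1 + τ * μ * cmu a μ - μ ^ 2)) * Real.exp (-μ * x) := by
  intro x
  have hΛ := one_add_mul_cmu_sub_sq_pos ha hμ0 hμ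
  have hV := hasDerivAt_Vfun hu.1.continuous hu.abs_le_const hμ0.le hu.abs_le_exp hΛ x
  exact ⟨hV.differentiableAt, hV.deriv ▸ abs_VfunDeriv_le hμ0.le hu.abs_le_exp hΛ x⟩

/-- Lemma 3.3: for `u ∈ ℰ_{τ,μ}(C₀)`, `V(·;u)` is differentiable and
`|V'(x;u)| ≤ (1/√(1+τμc_μ−μ²) + μ/(1+τμc_μ−μ²)) e^{−μx}`. -/
theorem Vfun_deriv_bound (a b τ μ : ℝ) (ha : 0 < a) (hb : 0 < b) (hτ : 0 < τ)
    (hμ0 : 0 < μ) (hμ : μ < muTau a τ)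
    (C₀ : ℝ) (hC₀ : 0 < C₀)
    (μt d : ℝ) (hμt₁ : μ < μt) (hμt₂ : μt < min (2 * μ) (muTau a τ))
    (hd : max 1 (C₀ ^ ((μ - μt) / μ)) < d)
    (u : ℝ → ℝ) (hu : memE μ C₀ μt d u) :
    ∀ x : ℝ, DifferentiableAt ℝ (Vfun τ (cmu a μ) u) x ∧
      |deriv (Vfun τ (cmu a μ) u) x|
        ≤ (1 / Real.sqrt (1 + τ * μ * cmu a μ - μ ^ 2)
            + μ / (1 + τ * μ * cmu a μ - μ ^ 2)) * Real.exp (-μ * x) :=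
  Vfun_deriv_bound_general a τ μ ha hμ0 hμ C₀ μt d u hu
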